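/- arXiv:math/0503131 — 4 statements merged into one kernel-verified Lean document; each statement's English description precedes it below -/
import Mathlib

section
/- Let q ≥ 1 and n₁,...,n_q ≥ 0 be integers, and let A_{i,j} ∈ ℝ^m for i = 1,...,q and j = 1,...,n_i+1 be points such that the set of all their coordinates (as real numbers) is algebraically independent over ℚ. Let 0 ≤ d ≤ T ≤ m, and let Π^d be a d-dimensional affine subspace of ℝ^m that is parallel to the coordinate subspace Π^T spanned by the first T standard basis vectors (i.e., Π^d is contained in a translate of Π^T). If q ≤ d+1 and Π^d meets the affine hull of the set M_i = {A_{i,1},...,A_{i,n_i+1}} for every i = 1,...,q, then n₁ + n₂ + ... + n_q ≥ (m − T)(q − 1). -/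
/-!
Write the point `x_i ∈ Π^d ∩ aff M_i` as `∑_j w_ij A_ij` with `∑_j w_ij = 1`. As `Π^d` is parallel
to `Π^T`, all `x_i` share their last `m - T` coordinates. Fix `i₀` and, for each `i`, some `j_i`
with `w_{i j_i} ≠ 0`. For `i ≠ i₀`, equating the last coordinates of `x_i` and `x_{i₀}` and
dividing by `w_{i j_i} = 1 - ∑_{j ≠ j_i} w_ij` shows that the `(q - 1)(m - T)` last coordinates of
the points `A_{i j_i}` lie in the field generated over the other coordinates by the `∑ n_i`
weights `w_ij`, `j ≠ j_i`. They are algebraically independent over the other coordinates, so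
there are at most `∑ n_i` of them.
-/

/-- The coordinate subspace of `ℝ^m` spanned by the first `T` standard basis vectors. -/
def coordSub (m T : ℕ) : Submodule ℝ (Fin m → ℝ) where
  carrier := {x | ∀ s : Fin m, T ≤ (s : ℕ) → x s = 0}
  add_mem' := by
    intro a b ha hb s hs
    simp [ha s hs, hb s hs]
  zero_mem' := by intro s _; rfl
  smul_mem' := by
    intro c x hx s hs
    simp [hx s hs]

open Set

theorem AlgebraicIndependent.card_le_of_isAlgebraic_adjoin {R A ι κ : Type*} [CommRing R]
    [CommRing A] [IsDomain A] [Algebra R A] [Fintype ι] [Fintype κ] {y : ι → A} {g : κ → A}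
    (hy : AlgebraicIndependent R y)
    (halg : ∀ i, IsAlgebraic (Algebra.adjoin R (range g)) (y i)) :
    Fintype.card ι ≤ Fintype.card κ := by
  have := (algebraMap R A).domain_nontrivial
  have := (faithfulSMul_iff_algebraMap_injective R A).2 hy.algebraMap_injective
  set M := AlgebraicIndependent.matroid R A
  have hcl : range y ⊆ M.closure (range g) := by
    rintro _ ⟨i, rfl⟩
    rw [AlgebraicIndependent.matroid_closure_eq]
    exact halg i
  have key : ENat.card ι ≤ ENat.card κ := calc
    ENat.card ι ≤ (range y).encard := hy.injective.encard_range
    _ ≤ M.eRk (M.closure (range g)) :=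
      Matroid.Indep.encard_le_eRk_of_subset hy.to_subtype_range hcl
    _ = M.eRk (range g) := M.eRk_closure_eq _
    _ ≤ (range g).encard := M.eRk_le_encard _
    _ ≤ ENat.card κ := by rw [← image_univ, ← encard_univ]; exact encard_image_le g univ
  simpa [ENat.card_eq_coe_fintype_card] using key

theorem card_mul_card_le_sum_of_algebraicIndependent {K L ι σ : Type*} [Field K] [Field L]
    [Algebra K L] [Fintype ι] [Fintype σ] {n : ι → ℕ} (A : ∀ i, Fin (n i + 1) → σ → L)
    (hA : AlgebraicIndependent K (fun p : Σ i, Fin (n i + 1) × σ => A p.1 p.2.1 p.2.2))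
    (w : ∀ i, Fin (n i + 1) → L) (hw : ∀ i, ∑ j, w i j = 1) (i₀ : ι)
    (hcomb : ∀ i s, ∑ j, w i j * A i j s = ∑ j, w i₀ j * A i₀ j s) :
    (Fintype.card ι - 1) * Fintype.card σ ≤ ∑ i, n i := by
  classical
  choose jj hjj using fun i => Finset.exists_ne_zero_of_sum_ne_zero ((hw i).symm ▸ one_ne_zero)
  set a := fun p : Σ i, Fin (n i + 1) × σ => A p.1 p.2.1 p.2.2
  set Y : Set (Σ i, Fin (n i + 1) × σ) := {p | p.1 ≠ i₀ ∧ p.2.1 = jj p.1}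
  set R := Algebra.adjoin K (a '' Yᶜ)
  let g : (Σ i, {j // j ≠ jj i}) → L := fun p => w p.1 p.2
  set S := Algebra.adjoin R (range g)
  have hwS : ∀ i j, w i j ∈ S := by
    intro i j
    by_cases hj : j = jj i
    · have hwj : w i j = 1 - ∑ j' ∈ Finset.univ.erase (jj i), w i j' := by
        rw [← hw i, ← Finset.add_sum_erase _ _ (Finset.mem_univ (jj i)), hj, add_sub_cancel_right]
      rw [hwj]
      exact sub_mem (one_mem S) (sum_mem fun j' hj' =>
        Algebra.subset_adjoin ⟨⟨i, j', (Finset.mem_erase.1 hj').1⟩, rfl⟩)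
    · exact Algebra.subset_adjoin ⟨⟨i, j, hj⟩, rfl⟩
  have haS : ∀ p ∉ Y, a p ∈ S := fun p hp =>
    S.algebraMap_mem (⟨a p, Algebra.subset_adjoin (mem_image_of_mem a hp)⟩ : R)
  have halg : ∀ p : Y, IsAlgebraic S (a p) := by
    rintro ⟨⟨i, j, s⟩, hi, hj⟩
    dsimp only at hi hj
    subst hj
    have hsolve : w i (jj i) * a ⟨i, jj i, s⟩ = ∑ j, w i₀ j * A i₀ j s
        - ∑ j ∈ Finset.univ.erase (jj i), w i j * A i j s := by
      rw [← hcomb i s, ← Finset.add_sum_erase _ _ (Finset.mem_univ (jj i)), add_sub_cancel_right]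
    have hrhs : ∑ j, w i₀ j * A i₀ j s - ∑ j ∈ Finset.univ.erase (jj i), w i j * A i j s ∈ S :=
      sub_mem (sum_mem fun j _ => mul_mem (hwS i₀ j) (haS ⟨i₀, j, s⟩ fun h => h.1 rfl))
        (sum_mem fun j hj => mul_mem (hwS i j)
          (haS ⟨i, j, s⟩ fun h => (Finset.mem_erase.1 hj).1 h.2))
    refine IsAlgebraic.of_mul (mem_nonZeroDivisors_of_ne_zero (hjj i).2)
      (isAlgebraic_algebraMap (⟨w i (jj i), hwS i (jj i)⟩ : S)) ?_
    rw [hsolve]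
    exact isAlgebraic_algebraMap (⟨_, hrhs⟩ : S)
  have hYcard : Fintype.card Y = (Fintype.card ι - 1) * Fintype.card σ := by
    let e : Y ≃ {i // i ≠ i₀} × σ :=
      { toFun := fun p => (⟨p.1.1, p.2.1⟩, p.1.2.2)
        invFun := fun q => ⟨⟨q.1, jj q.1, q.2⟩, q.1.2, rfl⟩
        left_inv := by
          rintro ⟨⟨i, j, s⟩, hi, hj⟩
          dsimp only at hj
          subst hj
          rfl
        right_inv := fun _ => rfl }
    rw [Fintype.card_congr e, Fintype.card_prod, Fintype.card_subtype_compl,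
      Fintype.card_subtype_eq]
  have hgcard : Fintype.card (Σ i, {j // j ≠ jj i}) = ∑ i, n i := by
    simp [Fintype.card_sigma]
  rw [← hYcard, ← hgcard]
  exact ((AlgebraicIndependent.iff_adjoin_image_compl Y).1 hA).2.card_le_of_isAlgebraic_adjoin halg

theorem exists_sum_eq_one_of_mem_affineSpan_range {k ι σ : Type*} [Ring k] [Fintype ι]
    {A : ι → σ → k} {x : σ → k} (hx : x ∈ affineSpan k (range A)) :
    ∃ w : ι → k, ∑ j, w j = 1 ∧ ∀ s, x s = ∑ j, w j * A j s := by
  obtain ⟨w, hw1, rfl⟩ := eq_affineCombination_of_mem_affineSpan_of_fintype hx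
  refine ⟨w, hw1, fun s => ?_⟩
  simp [Finset.affineCombination_eq_linear_combination _ _ _ hw1, Finset.sum_apply]

theorem apply_eq_of_mem_of_direction_le_coordSub {m T : ℕ} {P : AffineSubspace ℝ (Fin m → ℝ)}
    (hpar : P.direction ≤ coordSub m T) {x y : Fin m → ℝ} (hx : x ∈ P) (hy : y ∈ P)
    {s : Fin m} (hs : T ≤ s) : x s = y s :=
  sub_eq_zero.1 (hpar (AffineSubspace.vsub_mem_direction hx hy) s hs)

theorem stmt1_general (m q T : ℕ) (hq : 1 ≤ q) (n : Fin q → ℕ)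
    (A : ∀ i : Fin q, Fin (n i + 1) → (Fin m → ℝ))
    (hA : AlgebraicIndependent ℚ
      (fun p : Σ i : Fin q, Fin (n i + 1) × Fin m => A p.1 p.2.1 p.2.2))
    (hTm : T ≤ m)
    (P : AffineSubspace ℝ (Fin m → ℝ))
    (hpar : P.direction ≤ coordSub m T)
    (hmeet : ∀ i, ((P : Set (Fin m → ℝ)) ∩
      (affineSpan ℝ (Set.range (A i)) : Set (Fin m → ℝ))).Nonempty) :
    ((m : ℤ) - T) * ((q : ℤ) - 1) ≤ ∑ i, (n i : ℤ) := by
  choose x hx using hmeet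
  choose w hw hwx using fun i => exists_sum_eq_one_of_mem_affineSpan_range (hx i).2
  let e : Fin (m - T) → Fin m := fun s => ⟨T + s, by omega⟩
  have he : e.Injective := fun s t h => Fin.ext (by simpa [e] using h)
  have key := card_mul_card_le_sum_of_algebraicIndependent (K := ℚ)
    (fun i j s => A i j (e s)) (hA.comp (Sigma.map id fun _ => Prod.map id e)
      (Function.injective_id.sigma_map fun _ => Function.injective_id.prodMap he)) w hw ⟨0, hq⟩
    fun i s => by
      rw [← hwx, ← hwx]
      exact apply_eq_of_mem_of_direction_le_coordSub hpar (hx i).1 (hx _).1 (by simp [e])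
  rw [Fintype.card_fin, Fintype.card_fin] at key
  zify [hq, hTm] at key
  linarith

/-- Case I (q ≤ d+1) of Theorem 1.1: if the coordinates of the points `A i j` are
algebraically independent over `ℚ`, `P` is a `d`-plane parallel to the coordinate
subspace `Π^T`, `q ≤ d + 1`, and `P` meets the affine hull of each set
`M_i = {A i 1, …, A i (n_i+1)}`, then `n₁ + ⋯ + n_q ≥ (m − T)(q − 1)`. -/
theorem stmt1 (m q d T : ℕ) (hq : 1 ≤ q) (n : Fin q → ℕ)
    (A : ∀ i : Fin q, Fin (n i + 1) → (Fin m → ℝ))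
    (hA : AlgebraicIndependent ℚ
      (fun p : Σ i : Fin q, Fin (n i + 1) × Fin m => A p.1 p.2.1 p.2.2))
    (hdT : d ≤ T) (hTm : T ≤ m)
    (P : AffineSubspace ℝ (Fin m → ℝ))
    (hne : (P : Set (Fin m → ℝ)).Nonempty)
    (hdim : Module.finrank ℝ P.direction = d)
    (hpar : P.direction ≤ coordSub m T)
    (hqd : q ≤ d + 1)
    (hmeet : ∀ i, ((P : Set (Fin m → ℝ)) ∩
      (affineSpan ℝ (Set.range (A i)) : Set (Fin m → ℝ))).Nonempty) :
    ((m : ℤ) - T) * ((q : ℤ) - 1) ≤ ∑ i, (n i : ℤ) :=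
  stmt1_general m q T hq n A hA hTm P hpar hmeet
end

section
/- Let A_{i,j} ∈ ℝ^m, i = 1,...,q, j = 1,...,n_i+1, be points whose set of coordinates is algebraically independent over ℚ. Let 0 ≤ t ≤ d ≤ T ≤ m and let Π^d be a d-plane in ℝ^m parallel to coordinate planes Π^t ⊂ Π^T (meaning Π^t is contained in the direction space of Π^d which is contained in Π^T). If q ≤ d − t + 1 and n₁ + ... + n_q + 1 ≤ (m − T)(q − 1), then there exists i ∈ {1,...,q} such that Π^d does not meet the affine hull of M_i = {A_{i,1},...,A_{i,n_i+1}}. -/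
open MvPolynomial Matrix Finset

theorem sum_sigma_ite_fst_eq {I R : Type*} [Fintype I] [DecidableEq I] [AddCommMonoid R]
    {β : I → Type*} [∀ i, Fintype (β i)] (i : I) (F : (Σ i, β i) → R) :
    ∑ p : Σ i, β i, (if p.1 = i then F p else 0) = ∑ j, F ⟨i, j⟩ := by
  rw [Fintype.sum_sigma, Finset.sum_eq_single i (fun b _ hb => by simp [hb]) (by simp)]
  simp

theorem exists_fiber_card_le {α ι : Type*} [Fintype α] [Fintype ι] [DecidableEq ι] (cap : ι → ℕ)
    (h : Fintype.card α ≤ ∑ i, cap i) : ∃ f : α → ι, ∀ i, #{a | f a = i} ≤ cap i := by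
  obtain ⟨g⟩ := Function.Embedding.nonempty_of_card_le (β := Σ i, Fin (cap i)) (by simpa using h)
  refine ⟨fun a => (g a).1, fun i => ?_⟩
  calc #{a | (g a).1 = i} ≤ #{p : Σ i, Fin (cap i) | p.1 = i} :=
        card_le_card_of_injOn g (fun a ha => by simpa using ha) g.injective.injOn
    _ = cap i := by
        rw [show ({p : Σ i, Fin (cap i) | p.1 = i} : Finset _) = ({i} : Finset ι).sigma
          fun _ => univ by ext; simp, card_sigma]
        simp

theorem exists_embedding_forall_notMem {α β : Type*} [Fintype α] [Fintype β] [DecidableEq β]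
    (B : Finset β) (h : Fintype.card α + #B ≤ Fintype.card β) : ∃ e : α ↪ β, ∀ a, e a ∉ B := by
  obtain ⟨e⟩ := Function.Embedding.nonempty_of_card_le (α := α) (β := {b // b ∉ B})
    (by rw [Fintype.card_subtype_compl, Fintype.card_coe]; omega)
  exact ⟨e.trans (Function.Embedding.subtype _), fun a => (e a).2⟩

theorem Matrix.mulVec_injective_map_iff_det_submatrix_ne_zero {R C A F : Type*} [Fintype C]
    [DecidableEq C] [CommRing A] [Field F] (M : Matrix R C A) (e : C ≃ R) (f : A →+* F) :
    Function.Injective (M.map f).mulVec ↔ f (M.submatrix e id).det ≠ 0 := by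
  rw [RingHom.map_det, ← isUnit_iff_ne_zero, ← Matrix.isUnit_iff_isUnit_det,
    ← Matrix.mulVec_injective_iff_isUnit, RingHom.mapMatrix_apply, ← Matrix.submatrix_map]
  change _ ↔ Function.Injective fun v => (M.map f *ᵥ v) ∘ e
  exact ⟨fun h => e.surjective.injective_comp_right.comp h,
    fun h => Function.Injective.of_comp (f := fun w : R → F => w ∘ e) h⟩

theorem Matrix.mulVec_injective_map_aeval_of_specialization {ι K L R C : Type*} [Field K]
    [Field L] [Algebra K L] [Fintype R] [Fintype C] [DecidableEq C]
    {M : Matrix R C (MvPolynomial ι K)} (hcard : Fintype.card R = Fintype.card C) {σ : ι → K}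
    (hσ : Function.Injective (M.map (aeval σ)).mulVec) {x : ι → L}
    (hx : AlgebraicIndependent K x) : Function.Injective (M.map (aeval x)).mulVec := by
  let e : C ≃ R := Fintype.equivOfCardEq hcard.symm
  rw [← AlgHom.coe_toRingHom, M.mulVec_injective_map_iff_det_submatrix_ne_zero e] at hσ ⊢
  intro h
  apply hσ
  rw [(injective_iff_map_eq_zero _).mp (algebraicIndependent_iff_injective_aeval.mp hx) _ h,
    map_zero]

section TailSystem

variable {I D : Type*} [DecidableEq I] {n : I → ℕ} {k : ℕ}

/-- `x ⟨i, j, r⟩` is coordinate `r` of the point `j` of block `i`; the weights `w i` describe a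
common point of the affine hulls of the blocks. -/
def AffineHullsMeet {L : Type*} [Fintype I] [Ring L] (x : (Σ i, Fin (n i + 1) × Fin k) → L) :
    Prop :=
  ∃ w : ∀ i, Fin (n i + 1) → L, (∀ i, ∑ j, w i j = 1) ∧
    ∀ i i' r, ∑ j, w i j * x ⟨i, j, r⟩ = ∑ j, w i' j * x ⟨i', j, r⟩

/-- Column `.inr ()` carries a constant term: row `.inl i` says that the weights of block `i`
sum to it, row `.inr d` that blocks `(ρ d).1` and `i₀` agree in coordinate `(ρ d).2`. -/
def tailSystem {R : Type*} [Ring R] (i₀ : I) (ρ : D → I × Fin k)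
    (g : (Σ i, Fin (n i + 1) × Fin k) → R) : Matrix (I ⊕ D) ((Σ i, Fin (n i + 1)) ⊕ Unit) R :=
  Matrix.of fun
    | .inl i, .inl p => if p.1 = i then 1 else 0
    | .inl _, .inr _ => 1
    | .inr d, .inl p =>
      (if p.1 = (ρ d).1 then g ⟨p.1, p.2, (ρ d).2⟩ else 0) -
        (if p.1 = i₀ then g ⟨p.1, p.2, (ρ d).2⟩ else 0)
    | .inr _, .inr _ => 0

theorem tailSystem_map_aeval {K R : Type*} [CommRing K] [CommRing R] [Algebra K R] (i₀ : I)
    (ρ : D → I × Fin k) (g : (Σ i, Fin (n i + 1) × Fin k) → R) :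
    (tailSystem i₀ ρ (X : _ → MvPolynomial _ K)).map (aeval g) = tailSystem i₀ ρ g := by
  ext (i | d) (p | u) <;> simp [tailSystem, apply_ite (aeval g)]

variable [Fintype I] {R : Type*} [CommRing R] (i₀ : I) (ρ : D → I × Fin k)
  (g : (Σ i, Fin (n i + 1) × Fin k) → R) (v : (Σ i, Fin (n i + 1)) ⊕ Unit → R)

theorem tailSystem_mulVec_inl (i : I) :
    (tailSystem i₀ ρ g *ᵥ v) (.inl i) = ∑ j, v (.inl ⟨i, j⟩) + v (.inr ()) := by
  simp [Matrix.mulVec, dotProduct, tailSystem, ite_mul, sum_sigma_ite_fst_eq]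

theorem tailSystem_mulVec_inr {d : D} {i : I} {r : Fin k} (hd : ρ d = (i, r)) :
    (tailSystem i₀ ρ g *ᵥ v) (.inr d) =
      ∑ j, g ⟨i, j, r⟩ * v (.inl ⟨i, j⟩) - ∑ j, g ⟨i₀, j, r⟩ * v (.inl ⟨i₀, j⟩) := by
  simp [Matrix.mulVec, dotProduct, tailSystem, ite_mul, sub_mul, sum_sigma_ite_fst_eq, hd]

theorem tailSystem_mulVec_weights_eq_zero (w : ∀ i, Fin (n i + 1) → R) (hw : ∀ i, ∑ j, w i j = 1)
    (htail : ∀ i i' r, ∑ j, w i j * g ⟨i, j, r⟩ = ∑ j, w i' j * g ⟨i', j, r⟩) :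
    tailSystem i₀ ρ g *ᵥ Sum.elim (fun p => w p.1 p.2) (fun _ => -1) = 0 := by
  ext (i | d)
  · simp [tailSystem_mulVec_inl, hw]
  · simp [tailSystem_mulVec_inr i₀ ρ g _ rfl, mul_comm (g _), htail (ρ d).1 i₀]

end TailSystem

section Design

variable {I : Type*} [DecidableEq I] {n : I → ℕ} {k : ℕ}

def designRows (i₀ : I) (hk : n i₀ < k) (f : Fin (n i₀ + 1) → I) (own : ∀ i, Fin (n i) → Fin k) :
    Fin (n i₀ + 1) ⊕ (Σ i : {i // i ≠ i₀}, Fin (n i)) → I × Fin k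
  | .inl r => (f r, Fin.castLE hk r)
  | .inr ⟨i, j⟩ => (i, own i j)

/-- Block `i₀` consists of the unit vectors `e_j`, block `i ≠ i₀` of `0` and the `e_(own i j)`.
When `own (f r)` avoids coordinate `r`, the rows of `designRows` then solve the system
triangularly: first the weights of block `i₀`, then the others, then the constant. -/
def designPoint {K : Type*} [Zero K] [One K] (i₀ : I) (own : ∀ i, Fin (n i) → Fin k) :
    (Σ i, Fin (n i + 1) × Fin k) → K
  | ⟨i, j, r⟩ =>
    if i = i₀ then (if (r : ℕ) = j then 1 else 0)
    else Fin.cases (motive := fun _ => K) 0 (fun j' => if own i j' = r then 1 else 0) j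

variable {K : Type*} [CommRing K] (i₀ : I) (own : ∀ i, Fin (n i) ↪ Fin k)

theorem sum_designPoint_self_mul (hk : n i₀ < k) (r : Fin (n i₀ + 1)) (u : Fin (n i₀ + 1) → K) :
    ∑ j, designPoint i₀ (fun i => own i) ⟨i₀, j, Fin.castLE hk r⟩ * u j = u r := by
  simp [designPoint, Fin.val_inj]

theorem sum_designPoint_mul_of_ne {i : I} (hi : i ≠ i₀) (r : Fin k) (u : Fin (n i + 1) → K) :
    ∑ j, designPoint i₀ (fun i => own i) ⟨i, j, r⟩ * u j =
      ∑ j, if own i j = r then u j.succ else 0 := by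
  simp [designPoint, hi, Fin.sum_univ_succ]

theorem tailSystem_designPoint_mulVec_injective [Fintype I] (hk : n i₀ < k)
    (f : Fin (n i₀ + 1) → I) (hf : ∀ r, f r ≠ i₀) (havoid : ∀ r j, own (f r) j ≠ Fin.castLE hk r) :
    Function.Injective
      (tailSystem i₀ (designRows i₀ hk f fun i => own i)
        (designPoint (K := K) i₀ fun i => own i)).mulVec := by
  set M := tailSystem i₀ (designRows i₀ hk f fun i => own i)
    (designPoint (K := K) i₀ fun i => own i)
  suffices ∀ v, M *ᵥ v = 0 → v = 0 from fun v w h => sub_eq_zero.mp (this _ (by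
    rw [mulVec_sub, h, sub_self]))
  intro v hv
  have affine_row (i : I) : ∑ j, v (.inl ⟨i, j⟩) + v (.inr ()) = 0 := by
    rw [← tailSystem_mulVec_inl, hv, Pi.zero_apply]
  have compare_row {d i r} (hd : designRows i₀ hk f (fun i => own i) d = (i, r)) :=
    (tailSystem_mulVec_inr i₀ _ _ v hd).symm.trans (congrFun hv (.inr d))
  have block_i₀ (r : Fin (n i₀ + 1)) : v (.inl ⟨i₀, r⟩) = 0 := by
    simpa [sum_designPoint_mul_of_ne i₀ own (hf r), havoid, sum_designPoint_self_mul i₀ own hk]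
      using compare_row (d := .inl r) rfl
  have block_succ (i : {i // i ≠ i₀}) (j : Fin (n i)) : v (.inl ⟨i, j.succ⟩) = 0 := by
    simpa [sum_designPoint_mul_of_ne i₀ own i.2, block_i₀] using compare_row (d := .inr ⟨i, j⟩) rfl
  have constant : v (.inr ()) = 0 := by
    simpa [block_i₀] using affine_row i₀
  ext (⟨i, j⟩ | ⟨⟩)
  · by_cases hi : i = i₀
    · subst hi
      exact block_i₀ j
    · induction j using Fin.cases with
      | zero => simpa [Fin.sum_univ_succ, block_succ ⟨i, hi⟩, constant] using affine_row i
      | succ j => exact block_succ ⟨i, hi⟩ j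
  · exact constant

theorem card_designRows [Fintype I] :
    Fintype.card (I ⊕ Fin (n i₀ + 1) ⊕ Σ i : {i // i ≠ i₀}, Fin (n i)) =
      Fintype.card ((Σ i, Fin (n i + 1)) ⊕ Unit) := by
  simp only [Fintype.card_sum, Fintype.card_sigma, Fintype.card_fin, Fintype.card_unit,
    Finset.sum_add_distrib, Fintype.sum_eq_add_sum_subtype_ne n i₀]
  simp
  ring

end Design

section Counting

variable {I : Type*} [Fintype I] {n : I → ℕ} {k : ℕ}

theorem sum_add_le_mul_card_subtype (hsum : ∑ i, (n i : ℤ) + 1 ≤ k * (Fintype.card I - 1)) :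
    ∑ i : {i // n i ≤ k}, n i + 1 + k ≤ k * Fintype.card {i // n i ≤ k} := by
  have hsum' : ∑ i, n i + 1 + k ≤ k * Fintype.card I := by
    zify
    linarith
  have hlarge : #{i | ¬ n i ≤ k} * (k + 1) ≤ ∑ i ∈ {i | ¬ n i ≤ k}, n i := by
    simpa using card_nsmul_le_sum _ n (k + 1) fun i hi => by simp at hi; omega
  have hsplit := sum_filter_add_sum_filter_not univ (fun i => n i ≤ k) n
  have hcard : k * Fintype.card I = k * #{i | n i ≤ k} + k * #{i | ¬ n i ≤ k} := by
    rw [← mul_add, card_filter_add_card_filter_not, card_univ]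
  rw [Fintype.card_subtype, ← sum_subtype (p := fun i => n i ≤ k) {i | n i ≤ k} (by simp)]
  linarith

variable [DecidableEq I]

theorem exists_lt_and_succ_le_sum_ite (hn : ∀ i, n i ≤ k)
    (hsum : ∑ i, n i + 1 + k ≤ k * Fintype.card I) :
    ∃ i₀, n i₀ < k ∧ n i₀ + 1 ≤ ∑ i, if i = i₀ then 0 else k - n i := by
  have : Nonempty I := by
    rw [← Fintype.card_pos_iff]
    by_contra h
    simp_all
  obtain ⟨i₀, hmin⟩ := Finite.exists_min n
  have hcard : Fintype.card I * n i₀ ≤ ∑ i, n i := by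
    simpa using card_nsmul_le_sum univ n (n i₀) fun i _ => hmin i
  have hslack : ∑ i, (k - n i) + ∑ i, n i = k * Fintype.card I := by
    rw [← sum_add_distrib, sum_congr rfl fun i _ => Nat.sub_add_cancel (hn i)]
    simp [mul_comm]
  have hsplit : ∑ i, (if i = i₀ then 0 else k - n i) + (k - n i₀) = ∑ i, (k - n i) := by
    rw [← Fintype.sum_ite_eq' i₀ fun i => k - n i, ← sum_add_distrib]
    exact sum_congr rfl fun i _ => by split_ifs <;> simp
  have hk : n i₀ < k := by
    by_contra! hk
    have := Nat.mul_le_mul_left (Fintype.card I) hk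
    rw [mul_comm] at this
    omega
  exact ⟨i₀, hk, by omega⟩

theorem exists_design (hn : ∀ i, n i ≤ k) (hsum : ∑ i, n i + 1 + k ≤ k * Fintype.card I) :
    ∃ (i₀ : I) (hk : n i₀ < k) (f : Fin (n i₀ + 1) → I) (own : ∀ i, Fin (n i) ↪ Fin k),
      (∀ r, f r ≠ i₀) ∧ ∀ r j, own (f r) j ≠ Fin.castLE hk r := by
  obtain ⟨i₀, hk, hcap⟩ := exists_lt_and_succ_le_sum_ite hn hsum
  obtain ⟨f, hf⟩ := exists_fiber_card_le (α := Fin (n i₀ + 1))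
    (fun i => if i = i₀ then 0 else k - n i) (by simpa using hcap)
  have hborrowed (i : I) : Fintype.card (Fin (n i)) + #(image (Fin.castLE hk) {r | f r = i}) ≤
      Fintype.card (Fin k) := by
    have hcard := (card_image_le (f := Fin.castLE hk)).trans (hf i)
    have := hn i
    split_ifs at hcard <;> simp only [Fintype.card_fin] <;> grind
  choose own hown using fun i => exists_embedding_forall_notMem _ (hborrowed i)
  refine ⟨i₀, hk, f, own, fun r hr => ?_, fun r j h => hown (f r) j ?_⟩
  · have := hf i₀
    simp only [if_true, Nat.le_zero, card_eq_zero, filter_eq_empty_iff] at this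
    exact this (mem_univ r) hr
  · exact mem_image.mpr ⟨r, by simp, h.symm⟩

end Counting

section Generic

variable {I : Type*} [Fintype I] [DecidableEq I] {n : I → ℕ} {k : ℕ} {K L : Type*} [Field K]
  [Field L] [Algebra K L] {x : (Σ i, Fin (n i + 1) × Fin k) → L}

theorem AlgebraicIndependent.not_affineHullsMeet_of_le (hx : AlgebraicIndependent K x)
    (hn : ∀ i, n i ≤ k) (hsum : ∑ i, n i + 1 + k ≤ k * Fintype.card I) : ¬ AffineHullsMeet x := by
  rintro ⟨w, hw, htail⟩
  obtain ⟨i₀, hk, f, own, hf, havoid⟩ := exists_design hn hsum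
  have hinj := Matrix.mulVec_injective_map_aeval_of_specialization (card_designRows i₀)
    (by
      rw [tailSystem_map_aeval]
      exact tailSystem_designPoint_mulVec_injective i₀ own hk f hf havoid) hx
  rw [tailSystem_map_aeval] at hinj
  have hzero := hinj
    ((tailSystem_mulVec_weights_eq_zero i₀ _ x w hw htail).trans (mulVec_zero _).symm)
  simpa using congrFun hzero (.inr ())

theorem AlgebraicIndependent.not_affineHullsMeet (hx : AlgebraicIndependent K x)
    (hsum : ∑ i, (n i : ℤ) + 1 ≤ k * (Fintype.card I - 1)) : ¬ AffineHullsMeet x := by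
  rintro ⟨w, hw, htail⟩
  have hsmall : Function.Injective fun p : Σ i : {i // n i ≤ k}, Fin (n i + 1) × Fin k =>
      (⟨p.1, p.2⟩ : Σ i, Fin (n i + 1) × Fin k) := by
    rintro ⟨⟨i, _⟩, p⟩ ⟨⟨i', _⟩, p'⟩ h
    cases h
    rfl
  refine (hx.comp _ hsmall).not_affineHullsMeet_of_le (fun i => i.2)
    (sum_add_le_mul_card_subtype hsum) ⟨fun i => w i, fun i => hw i, fun i i' r => htail i i' r⟩

end Generic

theorem stmt4_general (m q T : ℕ) (n : Fin q → ℕ)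
    (A : ∀ i : Fin q, Fin (n i + 1) → (Fin m → ℝ))
    (hA : AlgebraicIndependent ℚ
      (fun p : Σ i : Fin q, Fin (n i + 1) × Fin m => A p.1 p.2.1 p.2.2))
    (hTm : T ≤ m)
    (P : AffineSubspace ℝ (Fin m → ℝ))
    (hparT : P.direction ≤ coordSub m T)
    (hsum : (∑ i, (n i : ℤ)) + 1 ≤ ((m : ℤ) - T) * ((q : ℤ) - 1)) :
    ∃ i, (P : Set (Fin m → ℝ)) ∩
      (affineSpan ℝ (Set.range (A i)) : Set (Fin m → ℝ)) = ∅ := by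
  by_contra! hmeet
  choose y hy using hmeet
  choose w hw hwy using fun i => eq_affineCombination_of_mem_affineSpan_of_fintype (hy i).2
  let tail (p : Σ i, Fin (n i + 1) × Fin (m - T)) : Σ i, Fin (n i + 1) × Fin m :=
    ⟨p.1, p.2.1, ⟨T + p.2.2, by omega⟩⟩
  have htail : Function.Injective tail := by
    rintro ⟨i, j, r⟩ ⟨i', j', r'⟩ h
    simp only [tail, Sigma.mk.injEq] at h
    obtain ⟨rfl, h⟩ := h
    simp_all [Fin.ext_iff]
  refine (hA.comp tail htail).not_affineHullsMeet (k := m - T) (by simpa [hTm] using hsum)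
    ⟨w, hw, fun i i' r => ?_⟩
  have := hparT (P.vsub_mem_direction (hy i).1 (hy i').1) ⟨T + r, by omega⟩ (by simp)
  rw [vsub_eq_sub, Pi.sub_apply, sub_eq_zero, hwy i, hwy i',
    affineCombination_eq_linear_combination _ _ _ (hw i),
    affineCombination_eq_linear_combination _ _ _ (hw i')] at this
  simpa [Finset.sum_apply, tail] using this

/-- Theorem 1.1, second case: if the coordinates of the points `A i j` are algebraically
independent over `ℚ`, `P` is a `d`-plane parallel to the pair of coordinate planes
`Π^t ⊂ Π^T`, `q ≤ d − t + 1` and `n₁ + ⋯ + n_q + 1 ≤ (m − T)(q − 1)`,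
then `P` misses the affine hull of some `M_i`. -/
theorem stmt4 (m q d t T : ℕ) (hq : 1 ≤ q) (n : Fin q → ℕ)
    (A : ∀ i : Fin q, Fin (n i + 1) → (Fin m → ℝ))
    (hA : AlgebraicIndependent ℚ
      (fun p : Σ i : Fin q, Fin (n i + 1) × Fin m => A p.1 p.2.1 p.2.2))
    (htd : t ≤ d) (hdT : d ≤ T) (hTm : T ≤ m)
    (P : AffineSubspace ℝ (Fin m → ℝ))
    (hne : (P : Set (Fin m → ℝ)).Nonempty)
    (hdim : Module.finrank ℝ P.direction = d)
    (hpart : coordSub m t ≤ P.direction)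
    (hparT : P.direction ≤ coordSub m T)
    (hqd : q ≤ d - t + 1)
    (hsum : (∑ i, (n i : ℤ)) + 1 ≤ ((m : ℤ) - T) * ((q : ℤ) - 1)) :
    ∃ i, (P : Set (Fin m → ℝ)) ∩
      (affineSpan ℝ (Set.range (A i)) : Set (Fin m → ℝ)) = ∅ :=
  stmt4_general m q T n A hA hTm P hparT hsum
end

section
/- Let X be a metric space, A ⊂ X compact, g₀ : X → ℝ^m continuous, ε > 0, and suppose that for every d-dimensional affine subspace Π of ℝ^m the set g₀(A) ∩ Π can be covered by a finite disjoint family of open subsets of ℝ^m each of diameter less than ε. Then there exist an open neighborhood U of A in X and δ > 0 such that for every continuous bounded g : X → ℝ^m with sup_{x∈U} ‖g(x) − g₀(x)‖ ≤ δ, the closure of g(U) has the same property: for every d-plane Π, the set cl(g(U)) ∩ Π is coverable by a finite disjoint family of open subsets of ℝ^m each of diameter less than ε. -/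
/-!
Parametrize the `d`-planes meeting `cthickening 1 K` by a base point and an orthonormal frame;
these parameters form a compact set. The slices `cthickening η K ∩ Π` depend upper
semicontinuously on `(η, Π)`, so the disjoint cover of `K ∩ Π` still covers the slices near
`(0, Π)`, and compactness yields one `η > 0` that works for every plane. With `K = g₀ '' A`,
`U = g₀ ⁻¹' thickening (η / 2) K` and `δ = η / 2`, the closure of `g '' U` lies in
`cthickening η K`.
-/

open Metric Set Filter Topology
open scoped RealInnerProductSpace

/-- `S` can be covered by a finite pairwise disjoint family of open subsets of `ℝ^m`,
each of diameter less than `ε`. -/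
def epsDisjointCover (m : ℕ) (ε : ℝ) (S : Set (EuclideanSpace ℝ (Fin m))) : Prop :=
  ∃ 𝒰 : Set (Set (EuclideanSpace ℝ (Fin m))), 𝒰.Finite ∧ (∀ U ∈ 𝒰, IsOpen U) ∧
    𝒰.PairwiseDisjoint id ∧ (∀ U ∈ 𝒰, Metric.diam U < ε) ∧ S ⊆ ⋃₀ 𝒰

/-- `S` is of type `(d, ε)`: for every `d`-dimensional affine subspace `P` of `ℝ^m`,
the set `S ∩ P` can be covered by a finite pairwise disjoint family of open subsets
of `ℝ^m` each of diameter less than `ε`. -/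
def typeDEps (m d : ℕ) (ε : ℝ) (S : Set (EuclideanSpace ℝ (Fin m))) : Prop :=
  ∀ P : AffineSubspace ℝ (EuclideanSpace ℝ (Fin m)),
    (P : Set (EuclideanSpace ℝ (Fin m))).Nonempty →
    Module.finrank ℝ P.direction = d →
    epsDisjointCover m ε (S ∩ (P : Set (EuclideanSpace ℝ (Fin m))))

lemma IsCompact.eventually_forall_mem_of_isClosed {Y E : Type*} [TopologicalSpace Y]
    [TopologicalSpace E] {R : Set E} (hR : IsCompact R) {Z : Set (Y × E)} (hZ : IsClosed Z)
    {W : Set E} (hW : IsOpen W) {y₀ : Y} (h : ∀ x ∈ R, (y₀, x) ∈ Z → x ∈ W) :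
    ∀ᶠ y in 𝓝 y₀, ∀ x ∈ R, (y, x) ∈ Z → x ∈ W := by
  refine hR.eventually_forall_of_forall_eventually fun x hx => ?_
  by_cases hxW : x ∈ W
  · filter_upwards [continuous_snd.continuousAt.preimage_mem_nhds (hW.mem_nhds hxW)]
      with q hq _ using hq
  · filter_upwards [hZ.isOpen_compl.mem_nhds fun hxZ => hxW (h x hx hxZ)] with q hq hqZ
    exact absurd hqZ hq

lemma isClosed_setOf_mem_cthickening {α : Type*} [PseudoEMetricSpace α] (K : Set α) :
    IsClosed {q : ℝ × α | q.2 ∈ cthickening q.1 K} :=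
  isClosed_le (continuous_infEDist.comp continuous_snd)
    (ENNReal.continuous_ofReal.comp continuous_fst)

section frameFlat

variable {E : Type*} [NormedAddCommGroup E] [InnerProductSpace ℝ E] {d : ℕ}

/-- The flat `p + span v`, for orthonormal `v`, cut out by an equation that is continuous
jointly in `p`, `v` and the point. -/
def frameFlat (p : E) (v : Fin d → E) : Set E :=
  {x | x - p = ∑ i, ⟪v i, x - p⟫ • v i}

lemma isClosed_setOf_mem_frameFlat :
    IsClosed {q : (E × (Fin d → E)) × E | q.2 ∈ frameFlat q.1.1 q.1.2} :=
  isClosed_eq (by fun_prop) (by fun_prop)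

lemma frameFlat_subset_mk'_span (p : E) (v : Fin d → E) :
    frameFlat p v ⊆ AffineSubspace.mk' p (Submodule.span ℝ (range v)) := by
  intro x hx
  rw [SetLike.mem_coe, AffineSubspace.mem_mk', vsub_eq_sub, hx]
  exact Submodule.sum_mem _ fun i _ => Submodule.smul_mem _ _ (Submodule.subset_span ⟨i, rfl⟩)

lemma AffineSubspace.exists_orthonormal_subset_frameFlat (P : AffineSubspace ℝ E)
    [FiniteDimensional ℝ P.direction] (hP : Module.finrank ℝ P.direction = d) {p : E}
    (hp : p ∈ P) : ∃ v : Fin d → E, Orthonormal ℝ v ∧ (P : Set E) ⊆ frameFlat p v := by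
  let b := (stdOrthonormalBasis ℝ P.direction).reindex (finCongr hP)
  refine ⟨fun i => b i, b.orthonormal.comp_linearIsometry P.direction.subtypeₗᵢ, ?_⟩
  intro x hx
  have hw := congrArg Subtype.val
    (b.sum_repr' ⟨x - p, by simpa using P.vsub_mem_direction hx hp⟩)
  simpa [frameFlat, Submodule.coe_inner] using hw.symm

lemma isCompact_setOf_orthonormal [FiniteDimensional ℝ E] :
    IsCompact {v : Fin d → E | Orthonormal ℝ v} := by
  refine (isCompact_closedBall (0 : Fin d → E) 1).of_isClosed_subset ?_ fun v hv => ?_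
  · simp only [orthonormal_iff_ite, ofPred_forall]
    exact isClosed_iInter fun i => isClosed_iInter fun j =>
      isClosed_eq (by fun_prop) continuous_const
  · rw [mem_closedBall, dist_zero_right, pi_norm_le_iff_of_nonneg zero_le_one]
    exact fun i => (hv.1 i).le

end frameFlat

section typeDEps

variable {m d : ℕ} {ε : ℝ}

lemma epsDisjointCover.mono {S T : Set (EuclideanSpace ℝ (Fin m))} (h : epsDisjointCover m ε T)
    (hST : S ⊆ T) : epsDisjointCover m ε S := by
  obtain ⟨𝒰, h𝒰fin, h𝒰open, h𝒰disj, h𝒰diam, hT⟩ := h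
  exact ⟨𝒰, h𝒰fin, h𝒰open, h𝒰disj, h𝒰diam, hST.trans hT⟩

lemma epsDisjointCover_empty : epsDisjointCover m ε ∅ :=
  ⟨∅, finite_empty, by simp, pairwiseDisjoint_empty, by simp, empty_subset _⟩

lemma typeDEps.mono {S T : Set (EuclideanSpace ℝ (Fin m))} (h : typeDEps m d ε T)
    (hST : S ⊆ T) : typeDEps m d ε S := fun P hP hd =>
  (h P hP hd).mono (inter_subset_inter_left _ hST)

/-- Upper semicontinuity of `(η, p, v) ↦ cthickening η K ∩ (p + span v)` at `η = 0`. -/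
lemma typeDEps.eventually_epsDisjointCover {K : Set (EuclideanSpace ℝ (Fin m))}
    (hK : IsCompact K) (h : typeDEps m d ε K)
    {s : EuclideanSpace ℝ (Fin m) × (Fin d → EuclideanSpace ℝ (Fin m))}
    (hs : Orthonormal ℝ s.2) :
    ∀ᶠ q : ℝ × (EuclideanSpace ℝ (Fin m) × (Fin d → EuclideanSpace ℝ (Fin m))) in 𝓝 (0, s),
      epsDisjointCover m ε (cthickening q.1 K ∩ frameFlat q.2.1 q.2.2) := by
  obtain ⟨p, v⟩ := s
  let P := AffineSubspace.mk' p (Submodule.span ℝ (range v))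
  have hPd : Module.finrank ℝ P.direction = d := by
    rw [AffineSubspace.direction_mk', finrank_span_eq_card hs.linearIndependent,
      Fintype.card_fin]
  obtain ⟨𝒰, h𝒰fin, h𝒰open, h𝒰disj, h𝒰diam, hK𝒰⟩ :=
    h P ⟨p, AffineSubspace.self_mem_mk' _ _⟩ hPd
  have hZ : IsClosed
      {z : (ℝ × (EuclideanSpace ℝ (Fin m) × (Fin d → EuclideanSpace ℝ (Fin m)))) ×
        EuclideanSpace ℝ (Fin m) | z.2 ∈ cthickening z.1.1 K ∧ z.2 ∈ frameFlat z.1.2.1 z.1.2.2} :=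
    ((isClosed_setOf_mem_cthickening K).preimage
        (continuous_fst.fst.prodMk continuous_snd)).inter
      (isClosed_setOf_mem_frameFlat.preimage (continuous_fst.snd.prodMk continuous_snd))
  have hcover := hK.cthickening.eventually_forall_mem_of_isClosed (R := cthickening 1 K) hZ
    (isOpen_sUnion h𝒰open) (y₀ := (0, p, v)) fun x _ ⟨hxK, hxP⟩ =>
      hK𝒰 ⟨by rwa [cthickening_zero, hK.isClosed.closure_eq] at hxK,
        frameFlat_subset_mk'_span p v hxP⟩
  have hsmall : ∀ᶠ q : ℝ × (EuclideanSpace ℝ (Fin m) × (Fin d → EuclideanSpace ℝ (Fin m)))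
      in 𝓝 (0, p, v), q.1 < 1 :=
    continuous_fst.continuousAt.eventually_lt continuousAt_const zero_lt_one
  filter_upwards [hcover, hsmall] with q hq hq1
  exact ⟨𝒰, h𝒰fin, h𝒰open, h𝒰disj, h𝒰diam, fun x hx =>
    hq x (cthickening_mono hq1.le K hx.1) hx⟩

theorem typeDEps.exists_cthickening {K : Set (EuclideanSpace ℝ (Fin m))} (hK : IsCompact K)
    (h : typeDEps m d ε K) : ∃ η > 0, typeDEps m d ε (cthickening η K) := by
  have hunif := ((hK.cthickening (r := 1)).prod
    isCompact_setOf_orthonormal).eventually_forall_of_forall_eventually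
      (P := fun η s => epsDisjointCover m ε (cthickening η K ∩ frameFlat s.1 s.2))
      fun _ hs => h.eventually_epsDisjointCover hK hs.2
  obtain ⟨η, ⟨hcover, hη1⟩, hη⟩ := ((hunif.and (eventually_le_nhds one_pos)).filter_mono
    nhdsWithin_le_nhds |>.and (self_mem_nhdsWithin (s := Ioi 0))).exists
  refine ⟨η, hη, fun P _ hd => ?_⟩
  rcases (cthickening η K ∩ P).eq_empty_or_nonempty with hempty | ⟨p, hpK, hpP⟩
  · exact hempty ▸ epsDisjointCover_empty
  obtain ⟨v, hv, hPv⟩ := P.exists_orthonormal_subset_frameFlat hd hpP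
  exact (hcover (p, v) ⟨cthickening_mono hη1 K hpK, hv⟩).mono
    (inter_subset_inter_right _ hPv)

end typeDEps

theorem stmt11_general {X : Type*} [MetricSpace X] (m d : ℕ) (A : Set X) (hA : IsCompact A)
    (g₀ : X → EuclideanSpace ℝ (Fin m)) (hg₀ : Continuous g₀) (ε : ℝ)
    (h : typeDEps m d ε (g₀ '' A)) :
    ∃ U : Set X, IsOpen U ∧ A ⊆ U ∧ ∃ δ : ℝ, 0 < δ ∧
      ∀ g : X → EuclideanSpace ℝ (Fin m), Continuous g →
        Bornology.IsBounded (Set.range g) →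
        (∀ x ∈ U, dist (g x) (g₀ x) ≤ δ) →
        typeDEps m d ε (closure (g '' U)) := by
  obtain ⟨η, hη, hthick⟩ := h.exists_cthickening (hA.image hg₀)
  refine ⟨g₀ ⁻¹' thickening (η / 2) (g₀ '' A), isOpen_thickening.preimage hg₀,
    fun x hx => self_subset_thickening (half_pos hη) _ (mem_image_of_mem g₀ hx),
    η / 2, half_pos hη, fun g _ _ hclose => hthick.mono ?_⟩
  refine closure_minimal ?_ isClosed_cthickening
  rintro _ ⟨x, hxU, rfl⟩
  obtain ⟨z, hzK, hz⟩ := mem_thickening_iff.mp hxU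
  refine mem_cthickening_of_dist_le _ z η _ hzK ?_
  linarith [dist_triangle (g x) (g₀ x) z, hclose x hxU]

/-- Lemma 3.1: if `A ⊆ X` is compact and `g₀(A)` is of type `(d, ε)`, then there exist
an open neighborhood `U` of `A` and `δ > 0` such that `cl(g(U))` is of type `(d, ε)` for
every bounded continuous `g` with `g|U` `δ`-close to `g₀|U`. -/
theorem stmt11 {X : Type*} [MetricSpace X] (m d : ℕ) (A : Set X) (hA : IsCompact A)
    (g₀ : X → EuclideanSpace ℝ (Fin m)) (hg₀ : Continuous g₀) (ε : ℝ) (hε : 0 < ε)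
    (h : typeDEps m d ε (g₀ '' A)) :
    ∃ U : Set X, IsOpen U ∧ A ⊆ U ∧ ∃ δ : ℝ, 0 < δ ∧
      ∀ g : X → EuclideanSpace ℝ (Fin m), Continuous g →
        Bornology.IsBounded (Set.range g) →
        (∀ x ∈ U, dist (g x) (g₀ x) ≤ δ) →
        typeDEps m d ε (closure (g '' U)) :=
  stmt11_general m d A hA g₀ hg₀ ε h
end

section
/- Let X be a compact metric space, g₀ : X → ℝ^m continuous, and 𝒫 a closed family of d-dimensional affine subspaces of ℝ^m (closed under limits of sequences of planes meeting a fixed compact set). Suppose Γ = {V̄₁,...,V̄_{q+1}} is a disjoint family of closures of open subsets of X such that for every Π ∈ 𝒫 the preimage g₀⁻¹(Π) meets at most q of the sets V̄₁,...,V̄_{q+1}. Then there exists δ > 0 such that every continuous g : X → ℝ^m with sup_x ‖g(x) − g₀(x)‖ < δ also satisfies: for every Π ∈ 𝒫, the set g⁻¹(Π) meets at most q of the sets V̄₁,...,V̄_{q+1}. -/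
/-- Kuratowski convergence of a sequence of affine subspaces to an affine subspace:
every point of the limit is a limit of points of the planes in the sequence, and
every limit of points of the planes lies in the limit plane. -/
def planesKuratowskiTendsto (m : ℕ)
    (P : ℕ → AffineSubspace ℝ (EuclideanSpace ℝ (Fin m)))
    (P₀ : AffineSubspace ℝ (EuclideanSpace ℝ (Fin m))) : Prop :=
  (∀ x ∈ (P₀ : Set (EuclideanSpace ℝ (Fin m))),
    ∃ s : ℕ → EuclideanSpace ℝ (Fin m), (∀ j, s j ∈ P j) ∧
      Filter.Tendsto s Filter.atTop (nhds x)) ∧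
  (∀ s : ℕ → EuclideanSpace ℝ (Fin m), (∀ j, s j ∈ P j) →
    ∀ x, Filter.Tendsto s Filter.atTop (nhds x) → x ∈ P₀)

/-- `Ps` is a closed family of `d`-dimensional affine subspaces of `ℝ^m`: each member is
a nonempty affine subspace of dimension `d`, and every sequence in `Ps` whose members all
meet a fixed compact set has a subsequence converging (in the Kuratowski sense) to a
member of `Ps`. -/
def closedPlaneFamily (m d : ℕ)
    (Ps : Set (AffineSubspace ℝ (EuclideanSpace ℝ (Fin m)))) : Prop :=
  (∀ P ∈ Ps, (P : Set (EuclideanSpace ℝ (Fin m))).Nonempty ∧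
    Module.finrank ℝ P.direction = d) ∧
  ∀ K : Set (EuclideanSpace ℝ (Fin m)), IsCompact K →
    ∀ P : ℕ → AffineSubspace ℝ (EuclideanSpace ℝ (Fin m)),
      (∀ i, P i ∈ Ps) →
      (∀ i, ((P i : Set (EuclideanSpace ℝ (Fin m))) ∩ K).Nonempty) →
      ∃ φ : ℕ → ℕ, StrictMono φ ∧ ∃ P₀ ∈ Ps,
        planesKuratowskiTendsto m (fun j => P (φ j)) P₀

/-- Claim 1 in the proof of Lemma 4.4: if `X` is a compact metric space,
`Γ = {cl V₁, …, cl V_{q+1}}` is a disjoint family of closures of open sets and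
`g₀⁻¹(P)` meets at most `q` of them for every `P ∈ Ps`, then the same holds for every
continuous `g` sufficiently uniformly close to `g₀`. -/
theorem stmt12 {X : Type*} [MetricSpace X] [CompactSpace X] (m d q : ℕ)
    (g₀ : X → EuclideanSpace ℝ (Fin m)) (hg₀ : Continuous g₀)
    (Ps : Set (AffineSubspace ℝ (EuclideanSpace ℝ (Fin m))))
    (hPs : closedPlaneFamily m d Ps)
    (V : Fin (q + 1) → Set X) (hVopen : ∀ j, IsOpen (V j))
    (hdisj : Pairwise fun j j' => Disjoint (closure (V j)) (closure (V j')))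
    (h0 : ∀ P ∈ Ps, ∃ j, Disjoint (closure (V j))
      (g₀ ⁻¹' (P : Set (EuclideanSpace ℝ (Fin m))))) :
    ∃ δ : ℝ, 0 < δ ∧ ∀ g : X → EuclideanSpace ℝ (Fin m), Continuous g →
      (∀ x, dist (g x) (g₀ x) < δ) →
      ∀ P ∈ Ps, ∃ j, Disjoint (closure (V j))
        (g ⁻¹' (P : Set (EuclideanSpace ℝ (Fin m)))) := by

  by_contra hcon
  push_neg at hcon
  choose g hgc hgd P hP hPnd using fun n : ℕ => hcon (1/(n+1)) (by positivity)
  have hx : ∀ n (j : Fin (q+1)), ∃ y, y ∈ closure (V j) ∧ g n y ∈ (P n : Set _) := by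
    intro n j
    have := hPnd n j
    rw [Set.not_disjoint_iff] at this
    exact this
  choose x hxV hxP using hx
  obtain ⟨a, -, φ₁, hφ₁, hconv⟩ := isCompact_univ.tendsto_subseq
    (x := fun n => (fun j => x n j : Fin (q+1) → X)) (fun n => Set.mem_univ _)
  have hconvj : ∀ j : Fin (q+1),
      Filter.Tendsto (fun n => x (φ₁ n) j) Filter.atTop (nhds (a j)) := by
    intro j
    exact (tendsto_pi_nhds.mp hconv) j
  have hKc : IsCompact (Metric.cthickening 1 (Set.range g₀)) :=
    (isCompact_range hg₀).cthickening
  have hdistle : ∀ n y, dist (g n y) (g₀ y) ≤ 1/(n+1) := by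
    intro n y
    exact (hgd n y).le
  have hmeet : ∀ n,
      ((P (φ₁ n) : Set (EuclideanSpace ℝ (Fin m))) ∩
        Metric.cthickening 1 (Set.range g₀)).Nonempty := by
    intro n
    refine ⟨g (φ₁ n) (x (φ₁ n) 0), hxP _ _, ?_⟩
    refine Metric.mem_cthickening_of_dist_le _ (g₀ (x (φ₁ n) 0)) 1 _
      ⟨x (φ₁ n) 0, rfl⟩ ?_
    have h1 := hdistle (φ₁ n) (x (φ₁ n) 0)
    have h2 : (1:ℝ)/(φ₁ n + 1) ≤ 1 := by
      rw [div_le_one (by positivity)]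
      have : (0:ℝ) ≤ (φ₁ n : ℝ) := Nat.cast_nonneg _
      linarith
    linarith
  obtain ⟨ψ, hψ, P₀, hP₀, hKur⟩ := hPs.2 _ hKc (fun n => P (φ₁ n))
    (fun n => hP _) hmeet
  obtain ⟨j, hj⟩ := h0 P₀ hP₀
  have haV : a j ∈ closure (V j) :=
    isClosed_closure.mem_of_tendsto (hconvj j)
      (Filter.Eventually.of_forall fun n => hxV _ _)
  have hsmem : ∀ n, g (φ₁ (ψ n)) (x (φ₁ (ψ n)) j) ∈ P (φ₁ (ψ n)) :=
    fun n => hxP _ _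
  have hg0t : Filter.Tendsto (fun n => g₀ (x (φ₁ (ψ n)) j)) Filter.atTop
      (nhds (g₀ (a j))) :=
    (hg₀.continuousAt.tendsto).comp ((hconvj j).comp hψ.tendsto_atTop)
  have hst : Filter.Tendsto (fun n => g (φ₁ (ψ n)) (x (φ₁ (ψ n)) j))
      Filter.atTop (nhds (g₀ (a j))) := by
    rw [tendsto_iff_dist_tendsto_zero]
    have hb : ∀ n, dist (g (φ₁ (ψ n)) (x (φ₁ (ψ n)) j)) (g₀ (a j)) ≤
        1/(n+1) + dist (g₀ (x (φ₁ (ψ n)) j)) (g₀ (a j)) := by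
      intro n
      have h1 := dist_triangle (g (φ₁ (ψ n)) (x (φ₁ (ψ n)) j))
        (g₀ (x (φ₁ (ψ n)) j)) (g₀ (a j))
      have h2 := hdistle (φ₁ (ψ n)) (x (φ₁ (ψ n)) j)
      have h3 : (1:ℝ)/(φ₁ (ψ n) + 1) ≤ 1/(n+1) := by
        apply one_div_le_one_div_of_le (by positivity)
        have : n ≤ φ₁ (ψ n) := le_trans hψ.le_apply hφ₁.le_apply
        have := (Nat.cast_le (α := ℝ)).mpr this
        linarith
      linarith
    refine squeeze_zero (fun n => dist_nonneg) hb ?_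
    have hA : Filter.Tendsto (fun n : ℕ => (1:ℝ)/(n+1)) Filter.atTop (nhds 0) :=
      tendsto_one_div_add_atTop_nhds_zero_nat
    have hB : Filter.Tendsto
        (fun n => dist (g₀ (x (φ₁ (ψ n)) j)) (g₀ (a j))) Filter.atTop (nhds 0) :=
      tendsto_iff_dist_tendsto_zero.mp hg0t
    simpa using hA.add hB
  have hmem : g₀ (a j) ∈ P₀ := hKur.2 _ hsmem _ hst
  exact Set.disjoint_left.mp hj haV hmem
end
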